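/- arXiv:2406.07554 — 2 statements merged into one kernel-verified Lean document; each statement's English description precedes it below -/
import Mathlib

section
/- Let g be a Lie 2-algebra with standard maximal torus t and let ξ, η ∈ Δ be t-roots. If g_ξ^{[2]} is not contained in ker(η) (where η is extended to h by η|_n = 0), then dim(g_η) = dim(g_{ξ+η}). -/
/-- A 2-map on a Lie algebra over the field `F` (char 2 version of a restricted structure):
`(c • x)^[2] = c^2 • x^[2]`, `ad (x^[2]) = (ad x) ∘ (ad x)` and
`(x+y)^[2] = x^[2] + y^[2] + [x,y]`. -/
structure IsTwoMap (F : Type*) [Field F] {g : Type*} [LieRing g] [LieAlgebra F g]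
    (p : g → g) : Prop where
  smul_pow : ∀ (c : F) (x : g), p (c • x) = (c ^ 2) • p x
  ad_pow : ∀ x y : g, ⁅p x, y⁆ = ⁅x, ⁅x, y⁆⁆
  add_pow : ∀ x y : g, p (x + y) = p x + p y + ⁅x, y⁆

/-- An element is 2-nilpotent if some iterate of the 2-map annihilates it. -/
def IsTwoNilpotent {g : Type*} [Zero g] (p : g → g) (x : g) : Prop :=
  ∃ k : ℕ, p^[k] x = 0

/-- A torus of a Lie 2-algebra: a Lie subalgebra closed under the 2-map on which the
2-map is invertible (bijective). -/
def IsTorus (F : Type*) [Field F] {g : Type*} [LieRing g] [LieAlgebra F g]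
    (p : g → g) (t : LieSubalgebra F g) : Prop :=
  (∀ x ∈ t, p x ∈ t) ∧ Set.BijOn p (t : Set g) (t : Set g)

/-- A maximal torus of a Lie 2-algebra. -/
def IsMaxTorus (F : Type*) [Field F] {g : Type*} [LieRing g] [LieAlgebra F g]
    (p : g → g) (t : LieSubalgebra F g) : Prop :=
  IsTorus F p t ∧ ∀ s : LieSubalgebra F g, IsTorus F p s → t ≤ s → s = t

/-- The weight (root) space of a linear functional `lam` on a torus `t`:
`g_lam = {v | [x, v] = lam x • v for all x ∈ t}`. -/
def rootSpace {F : Type*} [Field F] {g : Type*} [LieRing g] [LieAlgebra F g]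
    (t : LieSubalgebra F g) (lam : Module.Dual F t) : Submodule F g where
  carrier := {v | ∀ x : t, ⁅(x : g), v⁆ = lam x • v}
  add_mem' := by
    intro a b ha hb x
    rw [lie_add, ha x, hb x, smul_add]
  zero_mem' := by
    intro x
    rw [lie_zero, smul_zero]
  smul_mem' := by
    intro c v hv x
    rw [lie_smul, hv x, smul_comm]

/-- The set of `t`-roots: nonzero functionals with nonzero root space. -/
def rootSet {F : Type*} [Field F] {g : Type*} [LieRing g] [LieAlgebra F g]
    (t : LieSubalgebra F g) : Set (Module.Dual F t) :=
  {lam | lam ≠ 0 ∧ rootSpace t lam ≠ ⊥}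

/-- The subspace `N(σ, δ) = {x ∈ g_σ : [x, g_σ] ⊆ n and [[x, g_δ], g_{σ+δ}] ⊆ n}`,
given as `Nspace n g_σ g_δ g_{σ+δ}`. -/
def Nspace {F : Type*} [Field F] {g : Type*} [LieRing g] [LieAlgebra F g]
    (n gs gd gsd : Submodule F g) : Submodule F g where
  carrier := {x | x ∈ gs ∧ (∀ y ∈ gs, ⁅x, y⁆ ∈ n) ∧ ∀ z ∈ gd, ∀ w ∈ gsd, ⁅⁅x, z⁆, w⁆ ∈ n}
  add_mem' := by
    intro a b ha hb
    obtain ⟨ha1, ha2, ha3⟩ := ha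
    obtain ⟨hb1, hb2, hb3⟩ := hb
    refine ⟨gs.add_mem ha1 hb1, fun y hy => ?_, fun z hz w hw => ?_⟩
    · rw [add_lie]
      exact n.add_mem (ha2 y hy) (hb2 y hy)
    · rw [add_lie, add_lie]
      exact n.add_mem (ha3 z hz w hw) (hb3 z hz w hw)
  zero_mem' := by
    refine ⟨gs.zero_mem, fun y hy => ?_, fun z hz w hw => ?_⟩
    · rw [zero_lie]; exact n.zero_mem
    · rw [zero_lie, zero_lie]; exact n.zero_mem
  smul_mem' := by
    intro c x hx
    obtain ⟨h1, h2, h3⟩ := hx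
    refine ⟨gs.smul_mem c h1, fun y hy => ?_, fun z hz w hw => ?_⟩
    · rw [smul_lie]; exact n.smul_mem c (h2 y hy)
    · rw [smul_lie, smul_lie]; exact n.smul_mem c (h3 z hz w hw)

/-!
Take `x ∈ g_ξ` with `x^[2] = s + m`, `s ∈ t`, `m ∈ n` and `η(s) ≠ 0`. Since `2ξ = 0`, `ad x` maps
`g_η → g_{ξ+η} → g_η`, and `(ad x)² = ad (x^[2])` acts on `g_μ` as `μ(s) + ad m` with `ad m`
nilpotent. On `g_η` this is invertible, so `ad x : g_η → g_{ξ+η}` is injective. On `g_{ξ+η}` it is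
`(ξ+η)(s) + ad m`; if `(ξ+η)(s) = 0` it would be nilpotent, forcing the invertible map on
`g_η ≠ 0` to be nilpotent as well. Hence it is invertible and `ad x` is also surjective.
-/

section LinearAlgebra

variable {R V W : Type*}

lemma LinearMap.comp_pow_succ [Semiring R] [AddCommMonoid V] [Module R V] [AddCommMonoid W]
    [Module R W] (A : V →ₗ[R] W) (B : W →ₗ[R] V) (k : ℕ) :
    (B ∘ₗ A) ^ (k + 1) = B ∘ₗ (((A ∘ₗ B) ^ k) ∘ₗ A) := by
  induction k with
  | zero => rw [zero_add, pow_one, pow_zero]; rfl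
  | succ k ih =>
    rw [pow_succ, ih, pow_succ, Module.End.mul_eq_comp, Module.End.mul_eq_comp]
    simp only [LinearMap.comp_assoc]

lemma LinearMap.isNilpotent_comp_comm [Semiring R] [AddCommMonoid V] [Module R V]
    [AddCommMonoid W] [Module R W] {A : V →ₗ[R] W} {B : W →ₗ[R] V}
    (h : IsNilpotent (A ∘ₗ B)) : IsNilpotent (B ∘ₗ A) := by
  obtain ⟨k, hk⟩ := h
  exact ⟨k + 1, by rw [LinearMap.comp_pow_succ, hk, LinearMap.zero_comp, LinearMap.comp_zero]⟩

lemma IsNilpotent.isUnit_smul_one_add {K A : Type*} [Field K] [Ring A] [Algebra K A] {c : K}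
    (hc : c ≠ 0) {N : A} (hN : IsNilpotent N) : IsUnit (c • 1 + N) := by
  rw [← Algebra.algebraMap_eq_smul_one]
  exact hN.isUnit_add_left_of_commute ((isUnit_iff_ne_zero.mpr hc).map _)
    (Algebra.commutes c N).symm

variable {K : Type*} [Field K] [AddCommGroup V] [Module K V] [AddCommGroup W] [Module K W]

lemma LinearMap.bijective_of_isUnit_comp_of_comp_eq_smul_one_add [Nontrivial V]
    {A : V →ₗ[K] W} {B : W →ₗ[K] V} (hBA : IsUnit (B ∘ₗ A)) {c : K} {N : Module.End K W}
    (hN : IsNilpotent N) (hAB : A ∘ₗ B = c • 1 + N) : Function.Bijective A := by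
  have hBAbij := (Module.End.isUnit_iff _).mp hBA
  rw [LinearMap.coe_comp] at hBAbij
  refine ⟨hBAbij.1.of_comp, ?_⟩
  have hc : c ≠ 0 := by
    rintro rfl
    rw [zero_smul, zero_add] at hAB
    exact hBA.not_isNilpotent (LinearMap.isNilpotent_comp_comm (hAB ▸ hN))
  have hABbij := (Module.End.isUnit_iff _).mp (hAB ▸ hN.isUnit_smul_one_add hc)
  rw [LinearMap.coe_comp] at hABbij
  exact hABbij.2.of_comp

end LinearAlgebra

section RootSpaces

variable {F : Type*} [Field F] {g : Type*} [LieRing g] [LieAlgebra F g]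

lemma lie_mem_rootSpace {t : LieSubalgebra F g} {σ μ : Module.Dual F t} {a v : g}
    (ha : a ∈ rootSpace t σ) (hv : v ∈ rootSpace t μ) :
    ⁅a, v⁆ ∈ rootSpace t (σ + μ) := by
  intro s
  rw [leibniz_lie, ha s, hv s, smul_lie, lie_smul, LinearMap.add_apply, add_smul]

namespace IsTwoMap

variable {p : g → g} (hp : IsTwoMap F p)
include hp

lemma ad_iterate (x : g) (k : ℕ) :
    LieAlgebra.ad F g (p^[k] x) = LieAlgebra.ad F g x ^ 2 ^ k := by
  induction k with
  | zero => simp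
  | succ k ih =>
    have hsq : LieAlgebra.ad F g (p (p^[k] x)) = LieAlgebra.ad F g (p^[k] x) ^ 2 :=
      LinearMap.ext fun y => hp.ad_pow _ y
    rw [Function.iterate_succ_apply', hsq, ih, ← pow_mul, ← pow_succ]

lemma isNilpotent_ad {x : g} (hx : IsTwoNilpotent p x) : IsNilpotent (LieAlgebra.ad F g x) := by
  obtain ⟨k, hk⟩ := hx
  exact ⟨2 ^ k, by rw [← hp.ad_iterate, hk, map_zero]⟩

lemma comp_restrict_ad_eq {t : LieSubalgebra F g} {x m : g} {s : t} (hpx : p x = s + m)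
    {μ : Module.Dual F t} {W : Submodule F g}
    (hVW : ∀ v ∈ rootSpace t μ, LieAlgebra.ad F g x v ∈ W)
    (hWV : ∀ w ∈ W, LieAlgebra.ad F g x w ∈ rootSpace t μ)
    (hm : ∀ v ∈ rootSpace t μ, LieAlgebra.ad F g m v ∈ rootSpace t μ) :
    (LieAlgebra.ad F g x).restrict hWV ∘ₗ (LieAlgebra.ad F g x).restrict hVW =
      μ s • 1 + (LieAlgebra.ad F g m).restrict hm := by
  ext ⟨v, hv⟩
  change ⁅x, ⁅x, v⁆⁆ = μ s • v + ⁅m, v⁆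
  rw [← hp.ad_pow, hpx, add_lie, hv s]

end IsTwoMap

end RootSpaces

theorem statement3_general
    {F : Type*} [Field F] [CharP F 2]
    {g : Type*} [LieRing g] [LieAlgebra F g]
    (p : g → g) (hp : IsTwoMap F p)
    (t : LieSubalgebra F g)
    (n : Submodule F g)
    (hn : ∀ x : g, x ∈ n ↔ x ∈ rootSpace t 0 ∧ IsTwoNilpotent p x)
    (ξ η : Module.Dual F t) (hη : η ∈ rootSet t)
    (hnotker : ∃ x ∈ rootSpace t ξ, ∃ s : t, ∃ m ∈ n, p x = (s : g) + m ∧ η s ≠ 0) :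
    Module.finrank F (rootSpace t η) = Module.finrank F (rootSpace t (ξ + η)) := by
  obtain ⟨x, hx, s, m, hm, hpx, hηs⟩ := hnotker
  obtain ⟨hm0, hmnil⟩ := (hn m).mp hm
  have hξξη : ξ + (ξ + η) = η := LinearMap.ext fun s => CharTwo.add_cancel_left (ξ s) (η s)
  have hVW : ∀ v ∈ rootSpace t η, LieAlgebra.ad F g x v ∈ rootSpace t (ξ + η) :=
    fun v hv => lie_mem_rootSpace hx hv
  have hWV : ∀ w ∈ rootSpace t (ξ + η), LieAlgebra.ad F g x w ∈ rootSpace t η :=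
    fun w hw => hξξη ▸ lie_mem_rootSpace hx hw
  have hm_preserves : ∀ μ, ∀ v ∈ rootSpace t μ, LieAlgebra.ad F g m v ∈ rootSpace t μ :=
    fun μ v hv => zero_add μ ▸ lie_mem_rootSpace hm0 hv
  have hadm := hp.isNilpotent_ad hmnil
  have : Nontrivial (rootSpace t η) := Submodule.nontrivial_iff_ne_bot.mpr hη.2
  have hBA : IsUnit ((LieAlgebra.ad F g x).restrict hWV ∘ₗ (LieAlgebra.ad F g x).restrict hVW) :=
    hp.comp_restrict_ad_eq hpx hVW hWV (hm_preserves η) ▸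
      (Module.End.isNilpotent.restrict (hm_preserves η) hadm).isUnit_smul_one_add hηs
  exact LinearEquiv.finrank_eq <| LinearEquiv.ofBijective _ <|
    LinearMap.bijective_of_isUnit_comp_of_comp_eq_smul_one_add hBA
      (Module.End.isNilpotent.restrict (hm_preserves (ξ + η)) hadm)
      (hp.comp_restrict_ad_eq hpx hWV hVW (hm_preserves (ξ + η)))

/-- if `g_ξ^{[2]} ⊄ ker η` (with `η` extended to `h = t ⊕ n` by `η|_n = 0`),
then `dim g_η = dim g_{ξ+η}`. -/
theorem statement3
    {F : Type*} [Field F] [IsAlgClosed F] [CharP F 2]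
    {g : Type*} [LieRing g] [LieAlgebra F g] [FiniteDimensional F g]
    (p : g → g) (hp : IsTwoMap F p)
    (t : LieSubalgebra F g) (hmax : IsMaxTorus F p t)
    (n : Submodule F g)
    (hn : ∀ x : g, x ∈ n ↔ x ∈ rootSpace t 0 ∧ IsTwoNilpotent p x)
    (hstd : ∀ x ∈ rootSpace t 0, ∀ y ∈ n, ⁅x, y⁆ ∈ n)
    (hdecomp : rootSpace t 0 = t.toSubmodule ⊔ n)
    (hdisj : Disjoint t.toSubmodule n)
    (ξ η : Module.Dual F t) (hξ : ξ ∈ rootSet t) (hη : η ∈ rootSet t)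
    (hnotker : ∃ x ∈ rootSpace t ξ, ∃ s : t, ∃ m ∈ n, p x = (s : g) + m ∧ η s ≠ 0) :
    Module.finrank F (rootSpace t η) = Module.finrank F (rootSpace t (ξ + η)) :=
  statement3_general p hp t n hn ξ η hη hnotker
end

section
/- Let g be a Lie 2-algebra with toral rank MT(g) = r, standard maximal torus t of dimension r, and let {α_1, α_2, …, α_k} ⊆ Δ be linearly independent t-roots. If dim(g_{α_i}) ≠ dim(g_{α_1+α_i}) for all 2 ≤ i ≤ k, then g_{α_1}^{[2]} ⊆ I ⊕ n for some subspace I ⊆ t with dim(I) ≤ r − k. -/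
/-!
If `x ∈ g_α` is nonzero, `x^[2]` has weight `0`, so `x^[2] = s + m` with `s ∈ t` and `m`
2-nilpotent. Since `ad m` is nilpotent, `(ad x)² = ad s + ad m` is injective on every weight
space `g_μ` with `μ(s) ≠ 0`; in particular `α(s) = 0` because `[x, x] = 0`. In characteristic 2,
`ad x` maps `g_μ → g_{α+μ} → g_μ`, so `μ(s) ≠ 0` forces `dim g_μ = dim g_{α+μ}`. Hence the
hypotheses give `α_i(s) = 0` for all `i`, i.e. `s` lies in the common kernel of the `α_i`,
which has dimension `r - k`.
-/

section RootSpace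

variable {F : Type*} [Field F] {g : Type*} [LieRing g] [LieAlgebra F g] {t : LieSubalgebra F g}

lemma lie_mem_rootSpace_add {α μ : Module.Dual F t} {x y : g} (hx : x ∈ rootSpace t α)
    (hy : y ∈ rootSpace t μ) : ⁅x, y⁆ ∈ rootSpace t (α + μ) := fun u => by
  rw [leibniz_lie, hx u, hy u, lie_smul, smul_lie, LinearMap.add_apply, add_smul]

lemma finrank_dualCoannihilator_span_range {V : Type*} [AddCommGroup V] [Module F V]
    [FiniteDimensional F V] {k : ℕ} {a : Fin k → Module.Dual F V} (ha : LinearIndependent F a) :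
    Module.finrank F (Submodule.span F (Set.range a)).dualCoannihilator =
      Module.finrank F V - k := by
  have h := Subspace.finrank_add_finrank_dualCoannihilator_eq (Submodule.span F (Set.range a))
  rw [finrank_span_eq_card ha, Fintype.card_fin] at h
  omega

end RootSpace

namespace IsTwoMap

variable {F : Type*} [Field F] {g : Type*} [LieRing g] [LieAlgebra F g] {p : g → g}
  {t : LieSubalgebra F g}

lemma map_zero (hp : IsTwoMap F p) : p 0 = 0 := by
  have h := hp.add_pow 0 0
  rwa [add_zero, lie_zero, add_zero, left_eq_add] at h

lemma lie_iterate_eq_ad_pow (hp : IsTwoMap F p) (m y : g) (j : ℕ) :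
    ⁅p^[j] m, y⁆ = (LieAlgebra.ad F g m ^ 2 ^ j) y := by
  induction j generalizing y with
  | zero => simp
  | succ j ih =>
    rw [Function.iterate_succ_apply', hp.ad_pow, ih, ih, ← Module.End.mul_apply, ← pow_add,
      ← two_mul, ← pow_succ']

lemma isNilpotent_ad_of_isTwoNilpotent (hp : IsTwoMap F p) {m : g} (hm : IsTwoNilpotent p m) :
    IsNilpotent (LieAlgebra.ad F g m) := by
  obtain ⟨j, hj⟩ := hm
  exact ⟨2 ^ j, LinearMap.ext fun y => by
    rw [← hp.lie_iterate_eq_ad_pow, hj, zero_lie, LinearMap.zero_apply]⟩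

lemma eq_zero_of_lie_eq_smul (hp : IsTwoMap F p) {m y : g} (hm : IsTwoNilpotent p m)
    (hy : y ≠ 0) {c : F} (h : ⁅m, y⁆ = c • y) : c = 0 :=
  (Module.End.hasEigenvalue_of_hasEigenvector ⟨Module.End.mem_eigenspace_iff.mpr h, hy⟩
    |>.isNilpotent_of_isNilpotent (hp.isNilpotent_ad_of_isTwoNilpotent hm)).eq_zero

lemma map_mem_rootSpace_zero (hp : IsTwoMap F p) {α : Module.Dual F t} {x : g}
    (hx : x ∈ rootSpace t α) : p x ∈ rootSpace t 0 := fun u => by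
  rw [LinearMap.zero_apply, zero_smul, ← lie_skew, hp.ad_pow, ← lie_skew x (u : g), hx u,
    lie_neg, lie_smul, lie_self, smul_zero, neg_zero, neg_zero]

variable {x m : g} {s : t}

lemma eq_zero_of_lie_eq_zero (hp : IsTwoMap F p) (hpx : p x = s + m) (hm : IsTwoNilpotent p m)
    {μ : Module.Dual F t} (hμ : μ s ≠ 0) {y : g} (hy : y ∈ rootSpace t μ) (hxy : ⁅x, y⁆ = 0) :
    y = 0 := by
  by_contra hy0
  refine hμ (neg_eq_zero.mp (hp.eq_zero_of_lie_eq_smul hm hy0 ?_))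
  have h := hp.ad_pow x y
  rw [hxy, lie_zero, hpx, add_lie, hy s] at h
  rw [neg_smul]
  exact eq_neg_of_add_eq_zero_right h

lemma apply_eq_zero_of_mem_rootSpace (hp : IsTwoMap F p) {α : Module.Dual F t}
    (hx : x ∈ rootSpace t α) (hx0 : x ≠ 0) (hpx : p x = s + m) (hm : IsTwoNilpotent p m) :
    α s = 0 := by
  by_contra hα
  exact hx0 (hp.eq_zero_of_lie_eq_zero hpx hm hα hx (lie_self x))

lemma finrank_rootSpace_le [FiniteDimensional F g] (hp : IsTwoMap F p) {α μ : Module.Dual F t}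
    (hx : x ∈ rootSpace t α) (hpx : p x = s + m) (hm : IsTwoNilpotent p m) (hμ : μ s ≠ 0) :
    Module.finrank F (rootSpace t μ) ≤ Module.finrank F (rootSpace t (α + μ)) := by
  refine LinearMap.finrank_le_finrank_of_injective
    (f := (LieAlgebra.ad F g x).restrict fun _ hy => lie_mem_rootSpace_add hx hy) ?_
  rw [injective_iff_map_eq_zero]
  exact fun y hy => Subtype.ext (hp.eq_zero_of_lie_eq_zero hpx hm hμ y.2 (congrArg Subtype.val hy))

lemma apply_eq_zero_of_finrank_rootSpace_ne [CharP F 2] [FiniteDimensional F g]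
    (hp : IsTwoMap F p) {α μ : Module.Dual F t} (hx : x ∈ rootSpace t α) (hx0 : x ≠ 0)
    (hpx : p x = s + m) (hm : IsTwoNilpotent p m)
    (hdim : Module.finrank F (rootSpace t μ) ≠ Module.finrank F (rootSpace t (α + μ))) :
    μ s = 0 := by
  by_contra hμ
  have hα := hp.apply_eq_zero_of_mem_rootSpace hx hx0 hpx hm
  have hαα : α + α = 0 := LinearMap.ext fun u => CharTwo.add_self_eq_zero (α u)
  have hle := hp.finrank_rootSpace_le (μ := α + μ) hx hpx hm (by simpa [hα] using hμ)
  rw [← add_assoc, hαα, zero_add] at hle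
  exact hdim (le_antisymm (hp.finrank_rootSpace_le hx hpx hm hμ) hle)

end IsTwoMap

theorem statement5_general
    {F : Type*} [Field F] [CharP F 2]
    {g : Type*} [LieRing g] [LieAlgebra F g] [FiniteDimensional F g]
    (p : g → g) (hp : IsTwoMap F p)
    (t : LieSubalgebra F g)
    (n : Submodule F g)
    (hn : ∀ x : g, x ∈ n ↔ x ∈ rootSpace t 0 ∧ IsTwoNilpotent p x)
    (hdecomp : rootSpace t 0 = t.toSubmodule ⊔ n)
    (r : ℕ) (hdimt : Module.finrank F t = r)
    (k : ℕ) [NeZero k] (a : Fin k → Module.Dual F t)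
    (hindep : LinearIndependent F a)
    (hdims : ∀ i : Fin k, i ≠ 0 →
      Module.finrank F (rootSpace t (a i)) ≠ Module.finrank F (rootSpace t (a 0 + a i))) :
    ∃ I : Submodule F g, I ≤ t.toSubmodule ∧ Module.finrank F I ≤ r - k ∧
      ∀ x ∈ rootSpace t (a 0), p x ∈ I ⊔ n := by
  refine ⟨(Submodule.span F (Set.range a)).dualCoannihilator.map t.toSubmodule.subtype,
    Submodule.map_subtype_le _ _, ?_, fun x hx => ?_⟩
  · rw [Submodule.finrank_map_subtype_eq, ← hdimt]
    exact (finrank_dualCoannihilator_span_range hindep).le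
  obtain rfl | hx0 := eq_or_ne x 0
  · rw [hp.map_zero]
    exact zero_mem _
  obtain ⟨s, hs, m, hm, hpx⟩ := Submodule.mem_sup.mp (hdecomp ▸ hp.map_mem_rootSpace_zero hx)
  have hm' : IsTwoNilpotent p m := ((hn m).1 hm).2
  have hsK : (⟨s, hs⟩ : t) ∈ (Submodule.span F (Set.range a)).dualCoannihilator := by
    rw [← SetLike.mem_coe, Submodule.coe_dualCoannihilator_span]
    rintro _ ⟨i, rfl⟩
    obtain rfl | hi := eq_or_ne i 0
    · exact hp.apply_eq_zero_of_mem_rootSpace hx hx0 hpx.symm hm'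
    · exact hp.apply_eq_zero_of_finrank_rootSpace_ne hx hx0 hpx.symm hm' (hdims i hi)
  rw [← hpx]
  exact Submodule.add_mem_sup ⟨_, hsK, rfl⟩ hm

/-- if `α_1, …, α_k` are linearly independent roots with
`dim g_{α_i} ≠ dim g_{α_1+α_i}` for `i ≥ 2`, then `g_{α_1}^{[2]} ⊆ I ⊕ n` for some
subspace `I ⊆ t` with `dim I ≤ r - k`. -/
theorem statement5
    {F : Type*} [Field F] [IsAlgClosed F] [CharP F 2]
    {g : Type*} [LieRing g] [LieAlgebra F g] [FiniteDimensional F g]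
    (p : g → g) (hp : IsTwoMap F p)
    (t : LieSubalgebra F g) (hmax : IsMaxTorus F p t)
    (n : Submodule F g)
    (hn : ∀ x : g, x ∈ n ↔ x ∈ rootSpace t 0 ∧ IsTwoNilpotent p x)
    (hstd : ∀ x ∈ rootSpace t 0, ∀ y ∈ n, ⁅x, y⁆ ∈ n)
    (hdecomp : rootSpace t 0 = t.toSubmodule ⊔ n)
    (hdisj : Disjoint t.toSubmodule n)
    (r : ℕ) (hdimt : Module.finrank F t = r)
    (hrank : ∀ s : LieSubalgebra F g, IsTorus F p s → Module.finrank F s ≤ r)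
    (k : ℕ) [NeZero k] (a : Fin k → Module.Dual F t)
    (hindep : LinearIndependent F a) (hroots : ∀ i, a i ∈ rootSet t)
    (hdims : ∀ i : Fin k, i ≠ 0 →
      Module.finrank F (rootSpace t (a i)) ≠ Module.finrank F (rootSpace t (a 0 + a i))) :
    ∃ I : Submodule F g, I ≤ t.toSubmodule ∧ Module.finrank F I ≤ r - k ∧
      ∀ x ∈ rootSpace t (a 0), p x ∈ I ⊔ n :=
  statement5_general p hp t n hn hdecomp r hdimt k a hindep hdims
end
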